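/- arXiv:2405.05673 — 12 statements merged into one kernel-verified Lean document; each statement's English description precedes it below -/
import Mathlib

section
/- For any p, q ∈ (0,1), the Kullback-Leibler divergence between the Bernoulli distributions with parameters p and q satisfies D_KL(p‖q) ≤ (e/2)·(ln(p/(1-p)) − ln(q/(1-q)))². -/
/-!
In the natural parameter `θ = log (p / (1 - p))` the Bernoulli family has log-partition function
`A θ = log (1 + exp θ)`, whose derivative is the sigmoid `σ`, and `KL(p ‖ q)` is the Bregman
divergence `A s - A t - σ t (s - t)` of `A` between the natural parameters `t` of `p` and `s` of
`q`. Since `A'' = σ (1 - σ) ≤ 1/4`, this is at most `(s - t)² / 8 ≤ (e / 2) (s - t)²`.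
-/

open Real Set

/-- The descent lemma; monotonicity of `L x - f' x` is the derivative-free form of `f'' ≤ L`. -/
lemma sub_sub_mul_sub_le_of_monotone_mul_sub {f f' : ℝ → ℝ} {L : ℝ}
    (hf : ∀ x, HasDerivAt f (f' x) x) (hf' : Monotone fun x ↦ L * x - f' x) (t s : ℝ) :
    f s - f t - f' t * (s - t) ≤ L / 2 * (s - t) ^ 2 := by
  set g : ℝ → ℝ := fun u ↦ f u - f' t * u - L / 2 * (u - t) ^ 2
  have hg : ∀ u, HasDerivAt g (f' u - f' t - L * (u - t)) u := fun u ↦ by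
    refine (((hf u).sub ((hasDerivAt_id' u).const_mul (f' t))).sub
      ((((hasDerivAt_id' u).sub_const t).pow 2).const_mul (L / 2))).congr_deriv ?_
    push_cast
    ring
  have hcont : Continuous g := continuous_iff_continuousAt.2 fun u ↦ (hg u).continuousAt
  -- `g` has a global maximum at `t`: it increases on `(-∞, t]` and decreases on `[t, ∞)`.
  have hmax : g s ≤ g t := by
    rcases le_total t s with hts | hst
    · refine antitoneOn_of_hasDerivWithinAt_nonpos (convex_Ici t) hcont.continuousOn
        (fun u _ ↦ (hg u).hasDerivWithinAt) (fun u hu ↦ ?_) self_mem_Ici hts hts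
      have := hf' (le_of_lt (by simpa using hu : t < u))
      simp only at this
      linarith
    · refine monotoneOn_of_hasDerivWithinAt_nonneg (convex_Iic t) hcont.continuousOn
        (fun u _ ↦ (hg u).hasDerivWithinAt) (fun u hu ↦ ?_) hst self_mem_Iic hst
      have := hf' (le_of_lt (by simpa using hu : u < t))
      simp only at this
      linarith
  simp only [g, sub_self] at hmax
  linarith

lemma monotone_mul_sub_sigmoid : Monotone fun x ↦ 1 / 4 * x - sigmoid x := by
  refine monotone_of_hasDerivAt_nonneg
    (fun x ↦ ((hasDerivAt_id x).const_mul (1 / 4)).sub (hasDerivAt_sigmoid x)) fun x ↦ ?_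
  simp only [Pi.zero_apply, mul_one]
  nlinarith [sq_nonneg (sigmoid x - 1 / 2)]

lemma hasDerivAt_log_one_add_exp (x : ℝ) :
    HasDerivAt (fun x ↦ log (1 + exp x)) (sigmoid x) x := by
  convert ((hasDerivAt_exp x).const_add 1).log (by positivity) using 1
  rw [sigmoid_def, exp_neg]
  field_simp
  ring

lemma exp_log_div_one_sub {p : ℝ} (hp : p ∈ Ioo 0 1) : exp (log (p / (1 - p))) = p / (1 - p) :=
  exp_log (div_pos hp.1 (sub_pos.2 hp.2))

lemma sigmoid_log_div_one_sub {p : ℝ} (hp : p ∈ Ioo 0 1) : sigmoid (log (p / (1 - p))) = p := by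
  have := hp.1.ne'
  have := (sub_pos.2 hp.2).ne'
  rw [sigmoid_def, exp_neg, exp_log_div_one_sub hp, inv_div]
  field_simp
  ring

lemma log_one_add_exp_log_div_one_sub {p : ℝ} (hp : p ∈ Ioo 0 1) :
    log (1 + exp (log (p / (1 - p)))) = -log (1 - p) := by
  have : 1 - p ≠ 0 := (sub_pos.2 hp.2).ne'
  rw [exp_log_div_one_sub hp, ← log_inv]
  congr 1
  field_simp
  ring

lemma klBernoulli_le_sq_div_eight {p q : ℝ} (hp : p ∈ Ioo 0 1) (hq : q ∈ Ioo 0 1) :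
    p * log (p / q) + (1 - p) * log ((1 - p) / (1 - q)) ≤
      (log (p / (1 - p)) - log (q / (1 - q))) ^ 2 / 8 := by
  have hp₀ := hp.1.ne'
  have hq₀ := hq.1.ne'
  have hp₁ := (sub_pos.2 hp.2).ne'
  have hq₁ := (sub_pos.2 hq.2).ne'
  have key := sub_sub_mul_sub_le_of_monotone_mul_sub hasDerivAt_log_one_add_exp
    monotone_mul_sub_sigmoid (log (p / (1 - p))) (log (q / (1 - q)))
  rw [log_one_add_exp_log_div_one_sub hp, log_one_add_exp_log_div_one_sub hq,
    sigmoid_log_div_one_sub hp] at key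
  simp only [log_div, hp₀, hq₀, hp₁, hq₁, ne_eq, not_false_eq_true] at key ⊢
  linarith

theorem kl_bernoulli_le (p q : ℝ) (hp : p ∈ Set.Ioo (0:ℝ) 1) (hq : q ∈ Set.Ioo (0:ℝ) 1) :
    p * Real.log (p / q) + (1 - p) * Real.log ((1 - p) / (1 - q)) ≤
      (Real.exp 1 / 2) * (Real.log (p / (1 - p)) - Real.log (q / (1 - q))) ^ 2 := by
  have he : (1 : ℝ) / 8 ≤ exp 1 / 2 := by linarith [add_one_le_exp (1 : ℝ)]
  calc _ ≤ (log (p / (1 - p)) - log (q / (1 - q))) ^ 2 / 8 := klBernoulli_le_sq_div_eight hp hq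
    _ ≤ _ := by nlinarith [sq_nonneg (log (p / (1 - p)) - log (q / (1 - q)))]
end

section
/- For every D ≥ 1, the ratio v_D / a_D of the volume of the D-dimensional unit ball to the surface volume of the D-dimensional unit sphere (of intrinsic dimension D, a submanifold of R^{D+1}) is strictly less than 1/√(π(2D+1)). -/
/-!
With `a = (D + 1) / 2` the ratio is `Γ(a) / (2 √π Γ(a + 1/2))`, so the claim is Kershaw's bound
`√(a - 1/4) < Γ(a + 1/2) / Γ(a)`. Writing `B(u) = B(u, 1/2) = √π Γ(u) / Γ(u + 1/2)`, this reads
`B(a)² < π / (a - 1/4) = B(a - 1/4) B(a + 1/4)`, where the identity is `B(u) B(u + 1/2) = π / u`.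
The inequality is strict log-convexity of `u ↦ B(u, v)`, i.e. Cauchy–Schwarz for the Beta integrals:
`B(u - t, v) - 2 l B(u, v) + l² B(u + t, v) = ∫ x^(u-t-1) (1-x)^(v-1) (1 - l x^t)² > 0` for all `l`.
-/

open MeasureTheory Real Set Filter
open scoped Interval

namespace intervalIntegral

theorem intervalIntegral_pos_of_ae_pos_on {f : ℝ → ℝ} {a b : ℝ}
    (hfi : IntervalIntegrable f volume a b) (hpos : ∀ᵐ x, x ∈ Ioo a b → 0 < f x) (hab : a < b) :
    0 < ∫ x in a..b, f x := by
  have hnonneg : 0 ≤ᵐ[volume.restrict (Ι a b)] f := by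
    rw [EventuallyLE, uIoc_of_le hab.le]
    refine ae_restrict_of_ae_eq_of_ae_restrict Ioo_ae_eq_Ioc ?_
    rw [ae_restrict_iff' measurableSet_Ioo]
    filter_upwards [hpos] with x hx hxab using (hx hxab).le
  have hsupp : Ioo a b ≤ᵐ[volume] (Function.support f ∩ Ioc a b : Set ℝ) := by
    filter_upwards [hpos] with x hx hxab using ⟨(hx hxab).ne', Ioo_subset_Ioc_self hxab⟩
  rw [integral_pos_iff_support_of_nonneg_ae' hnonneg hfi]
  exact ⟨hab, ((Measure.measure_Ioo_pos _).mpr hab).trans_le (measure_mono_ae hsupp)⟩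

end intervalIntegral

namespace Real

noncomputable def betaIntegral (u v : ℝ) : ℝ :=
  ∫ x in (0 : ℝ)..1, x ^ (u - 1) * (1 - x) ^ (v - 1)

theorem ofReal_betaIntegral_integrand (u v : ℝ) {x : ℝ} (hx : x ∈ Icc (0 : ℝ) 1) :
    ((x ^ (u - 1) * (1 - x) ^ (v - 1) : ℝ) : ℂ) =
      (x : ℂ) ^ ((u : ℂ) - 1) * (1 - (x : ℂ)) ^ ((v : ℂ) - 1) := by
  rw [Complex.ofReal_mul, Complex.ofReal_cpow hx.1, Complex.ofReal_cpow (sub_nonneg.2 hx.2)]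
  push_cast
  rfl

theorem ofReal_betaIntegral (u v : ℝ) : (betaIntegral u v : ℂ) = Complex.betaIntegral u v := by
  rw [betaIntegral, Complex.betaIntegral, ← intervalIntegral.integral_ofReal]
  refine intervalIntegral.integral_congr fun x hx => ?_
  rw [uIcc_of_le zero_le_one] at hx
  exact ofReal_betaIntegral_integrand u v hx

theorem intervalIntegrable_betaIntegral_integrand {u v : ℝ} (hu : 0 < u) (hv : 0 < v) :
    IntervalIntegrable (fun x => x ^ (u - 1) * (1 - x) ^ (v - 1)) volume 0 1 := by
  have hre : IntegrableOn (fun x : ℝ => ((x : ℂ) ^ ((u : ℂ) - 1) * (1 - (x : ℂ)) ^ ((v : ℂ) - 1)).re)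
      (Ioc 0 1) := (Complex.betaIntegral_convergent (by simpa) (by simpa)).1.re
  rw [intervalIntegrable_iff_integrableOn_Ioc_of_le zero_le_one]
  refine hre.congr_fun (fun x hx => ?_) measurableSet_Ioc
  dsimp only
  rw [← ofReal_betaIntegral_integrand u v (Ioc_subset_Icc_self hx), Complex.ofReal_re]

theorem Gamma_mul_Gamma_eq_Gamma_add_mul_betaIntegral {u v : ℝ} (hu : 0 < u) (hv : 0 < v) :
    Gamma u * Gamma v = Gamma (u + v) * betaIntegral u v := by
  apply Complex.ofReal_injective
  push_cast [← Complex.Gamma_ofReal, ofReal_betaIntegral]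
  exact Complex.Gamma_mul_Gamma_eq_betaIntegral (by simpa) (by simpa)

theorem betaIntegral_pos {u v : ℝ} (hu : 0 < u) (hv : 0 < v) : 0 < betaIntegral u v := by
  refine intervalIntegral.intervalIntegral_pos_of_pos_on
    (intervalIntegrable_betaIntegral_integrand hu hv) (fun x hx => ?_) zero_lt_one
  have : 0 < 1 - x := sub_pos.2 hx.2
  have : 0 < x := hx.1
  positivity

theorem betaIntegral_mul_betaIntegral_add_half {u : ℝ} (hu : 0 < u) :
    betaIntegral u (1 / 2) * betaIntegral (u + 1 / 2) (1 / 2) = π / u := by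
  have h₁ := Gamma_mul_Gamma_eq_Gamma_add_mul_betaIntegral hu one_half_pos
  have h₂ := Gamma_mul_Gamma_eq_Gamma_add_mul_betaIntegral (by positivity : 0 < u + 1 / 2)
    one_half_pos
  rw [Gamma_one_half_eq, add_assoc, add_halves] at *
  have hΓ := Gamma_pos_of_pos hu
  have hΓ' := Gamma_pos_of_pos (by positivity : 0 < u + 1 / 2)
  rw [Gamma_add_one hu.ne'] at h₂
  rw [eq_div_iff hu.ne']
  refine mul_left_cancel₀ (mul_pos hΓ hΓ').ne' ?_
  linear_combination -(u * Gamma u * betaIntegral (u + 1 / 2) (1 / 2)) * h₁ - Gamma u * √π * h₂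
    + Gamma u * Gamma (u + 1 / 2) * mul_self_sqrt pi_pos.le

theorem betaIntegral_sub_two_mul_add_sq_mul_pos {u v t : ℝ} (l : ℝ) (hut : 0 < u - t)
    (hut' : 0 < u + t) (ht : t ≠ 0) (hv : 0 < v) :
    0 < betaIntegral (u - t) v - 2 * l * betaIntegral u v + l ^ 2 * betaIntegral (u + t) v := by
  have i₁ := intervalIntegrable_betaIntegral_integrand hut hv
  have i₂ := intervalIntegrable_betaIntegral_integrand (by linarith : 0 < u) hv
  have i₃ := intervalIntegrable_betaIntegral_integrand hut' hv
  have hsum : betaIntegral (u - t) v - 2 * l * betaIntegral u v + l ^ 2 * betaIntegral (u + t) v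
      = ∫ x in (0 : ℝ)..1, (x ^ (u - t - 1) * (1 - x) ^ (v - 1)
          - 2 * l * (x ^ (u - 1) * (1 - x) ^ (v - 1))
          + l ^ 2 * (x ^ (u + t - 1) * (1 - x) ^ (v - 1))) := by
    rw [intervalIntegral.integral_add, intervalIntegral.integral_sub,
      intervalIntegral.integral_const_mul, intervalIntegral.integral_const_mul]
    exacts [rfl, i₁, i₂.const_mul _, i₁.sub (i₂.const_mul _), i₃.const_mul _]
  rw [hsum]
  refine intervalIntegral.intervalIntegral_pos_of_ae_pos_on
    ((i₁.sub (i₂.const_mul _)).add (i₃.const_mul _)) ?_ zero_lt_one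
  filter_upwards [volume.ae_ne ((l⁻¹) ^ t⁻¹)] with x hxc hx
  have hx₀ : 0 < x := hx.1
  have hx₁ : 0 < 1 - x := sub_pos.2 hx.2
  have hsq : x ^ (u - t - 1) * (1 - x) ^ (v - 1) - 2 * l * (x ^ (u - 1) * (1 - x) ^ (v - 1))
      + l ^ 2 * (x ^ (u + t - 1) * (1 - x) ^ (v - 1))
      = x ^ (u - t - 1) * (1 - x) ^ (v - 1) * (1 - l * x ^ t) ^ 2 := by
    have h₁ : x ^ (u - 1) = x ^ (u - t - 1) * x ^ t := by rw [← rpow_add hx₀]; ring_nf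
    have h₂ : x ^ (u + t - 1) = x ^ (u - t - 1) * x ^ t * x ^ t := by
      rw [← rpow_add hx₀, ← rpow_add hx₀]; ring_nf
    rw [h₁, h₂]
    ring
  have hne : 1 - l * x ^ t ≠ 0 := by
    intro h
    apply hxc
    rw [← rpow_rpow_inv hx₀.le ht, eq_inv_of_mul_eq_one_right (sub_eq_zero.1 h).symm]
  rw [hsq]
  exact mul_pos (by positivity) (by positivity)

theorem betaIntegral_sq_lt_mul {u v t : ℝ} (hut : 0 < u - t) (hut' : 0 < u + t) (ht : t ≠ 0)
    (hv : 0 < v) : betaIntegral u v ^ 2 < betaIntegral (u - t) v * betaIntegral (u + t) v := by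
  have hB := betaIntegral_pos hut' hv
  have hQ := betaIntegral_sub_two_mul_add_sq_mul_pos (betaIntegral u v / betaIntegral (u + t) v)
    hut hut' ht hv
  field_simp at hQ
  linarith

theorem sqrt_sub_quarter_lt_Gamma_add_half_div_Gamma {a : ℝ} (ha : 1 / 4 < a) :
    √(a - 1 / 4) < Gamma (a + 1 / 2) / Gamma a := by
  have ha₀ : 0 < a - 1 / 4 := sub_pos.2 ha
  have hΓ := Gamma_pos_of_pos (by linarith : 0 < a)
  have hΓ' := Gamma_pos_of_pos (by linarith : 0 < a + 1 / 2)
  have hlt := betaIntegral_sq_lt_mul ha₀ (by linarith) (by norm_num : (1 / 4 : ℝ) ≠ 0)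
    one_half_pos
  rw [show a + 1 / 4 = a - 1 / 4 + 1 / 2 by ring, betaIntegral_mul_betaIntegral_add_half ha₀]
    at hlt
  have hB := Gamma_mul_Gamma_eq_Gamma_add_mul_betaIntegral (by linarith : 0 < a) one_half_pos
  rw [Gamma_one_half_eq] at hB
  have hsq : (a - 1 / 4) * Gamma a ^ 2 < Gamma (a + 1 / 2) ^ 2 := by
    rw [lt_div_iff₀ ha₀, mul_comm] at hlt
    refine lt_of_mul_lt_mul_right (?_ : _ * π < _ * π) pi_pos.le
    calc (a - 1 / 4) * Gamma a ^ 2 * π = (a - 1 / 4) * (Gamma a * √π) ^ 2 := by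
          rw [mul_pow, sq_sqrt pi_pos.le]; ring
      _ = Gamma (a + 1 / 2) ^ 2 * ((a - 1 / 4) * betaIntegral a (1 / 2) ^ 2) := by
          rw [hB]; ring
      _ < Gamma (a + 1 / 2) ^ 2 * π := by gcongr
  rw [lt_div_iff₀ hΓ]
  refine lt_of_pow_lt_pow_left₀ 2 hΓ'.le ?_
  rwa [mul_pow, sq_sqrt ha₀.le]

end Real

theorem ball_sphere_volume_ratio_general (D : ℕ) :
    (Real.pi ^ ((D : ℝ) / 2) / Real.Gamma ((D : ℝ) / 2 + 1)) /
      (2 * Real.pi ^ (((D : ℝ) + 1) / 2) / Real.Gamma (((D : ℝ) + 1) / 2)) <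
      1 / Real.sqrt (Real.pi * (2 * (D : ℝ) + 1)) := by
  set a : ℝ := ((D : ℝ) + 1) / 2 with ha_def
  have ha : 1 / 4 < a := by rw [ha_def]; linarith [D.cast_nonneg (α := ℝ)]
  have hpow : π ^ a = π ^ ((D : ℝ) / 2) * √π := by
    rw [sqrt_eq_rpow, ← rpow_add pi_pos, ha_def]; ring_nf
  calc (π ^ ((D : ℝ) / 2) / Gamma ((D : ℝ) / 2 + 1)) / (2 * π ^ a / Gamma a)
      = 1 / (Gamma (a + 1 / 2) / Gamma a) / (2 * √π) := by
        rw [hpow, show (D : ℝ) / 2 + 1 = a + 1 / 2 by ring]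
        field_simp
    _ < 1 / √(a - 1 / 4) / (2 * √π) := by
        gcongr
        exact sqrt_sub_quarter_lt_Gamma_add_half_div_Gamma ha
    _ = 1 / √(π * (2 * (D : ℝ) + 1)) := by
        rw [show π * (2 * (D : ℝ) + 1) = 2 ^ 2 * π * (a - 1 / 4) by ring, sqrt_mul, sqrt_mul,
          sqrt_sq zero_le_two]
        · field_simp
        all_goals positivity

theorem ball_sphere_volume_ratio (D : ℕ) (hD : 1 ≤ D) :
    (Real.pi ^ ((D : ℝ) / 2) / Real.Gamma ((D : ℝ) / 2 + 1)) /
      (2 * Real.pi ^ (((D : ℝ) + 1) / 2) / Real.Gamma (((D : ℝ) + 1) / 2)) <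
      1 / Real.sqrt (Real.pi * (2 * (D : ℝ) + 1)) :=
  ball_sphere_volume_ratio_general D
end

section
/- Kershaw's inequality: for any t > 0 and s ∈ (0,1), Γ(t+1)/Γ(t+s) > (t + s/2)^{1-s}. -/
/-!
Put `R(x) = Γ(x+1) / (Γ(x+s) (x+s/2)^(1-s))`. The functional equation gives
`R(x+1) / R(x) = ((x+1)/(x+s)) / ((x+1+s/2)/(x+s/2))^(1-s)`, and both quotients have the form
`(1+z)/(1-z)`, with `z = (1-s)/(2x+1+s)` and `z = 1/(2x+1+s)` respectively; since
`log ((1+z)/(1-z)) / z` is increasing (its power series has positive coefficients), `R` strictly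
decreases under `x ↦ x+1`. Log-convexity of `Γ` gives `R(x) ≥ (x/(x+s/2))^(1-s)`, which tends
to `1` along `x + n`, so `R(t) > R(t+1) ≥ 1`.
-/

open Real Filter Topology

theorem mul_log_div_one_sub_lt {x y : ℝ} (hx : 0 < x) (hxy : x < y) (hy : y < 1) :
    y * log ((1 + x) / (1 - x)) < x * log ((1 + y) / (1 - y)) := by
  have hy₀ : 0 < y := hx.trans hxy
  rw [log_div (by linarith) (by linarith), log_div (by linarith) (by linarith)]
  refine hasSum_lt (i := 1) (fun k => ?_) ?_
    ((hasSum_log_sub_log_of_abs_lt_one (by rw [abs_lt]; constructor <;> linarith)).mul_left y)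
    ((hasSum_log_sub_log_of_abs_lt_one (by rw [abs_lt]; constructor <;> linarith)).mul_left x)
  · have hpow : x ^ (2 * k) ≤ y ^ (2 * k) := pow_le_pow_left₀ hx.le hxy.le _
    have hc : (0 : ℝ) ≤ 2 * (1 / (2 * k + 1)) * x * y := by positivity
    simp only [pow_succ]
    nlinarith [mul_le_mul_of_nonneg_left hpow hc]
  · have : 0 < x * y * (y ^ 2 - x ^ 2) := mul_pos (mul_pos hx hy₀) (by nlinarith)
    norm_num
    nlinarith

theorem log_div_add_lt_mul_log_div {u s : ℝ} (hu : 0 < u + s / 2) (hs₀ : 0 < s) (hs₁ : s < 1) :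
    log ((u + 1) / (u + s)) < (1 - s) * log ((u + 1 + s / 2) / (u + s / 2)) := by
  have hd : 1 < 2 * u + 1 + s := by linarith
  have key := mul_log_div_one_sub_lt (x := (1 - s) / (2 * u + 1 + s)) (y := 1 / (2 * u + 1 + s))
    (div_pos (by linarith) (by linarith)) (div_lt_div_of_pos_right (by linarith) (by linarith))
    ((div_lt_one (by linarith)).2 hd)
  have e₁ : (1 + (1 - s) / (2 * u + 1 + s)) / (1 - (1 - s) / (2 * u + 1 + s))
      = (u + 1) / (u + s) := by
    rw [div_eq_div_iff (sub_pos.2 ((div_lt_one (by linarith)).2 (by linarith))).ne' (by linarith)]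
    field_simp
    ring
  have e₂ : (1 + 1 / (2 * u + 1 + s)) / (1 - 1 / (2 * u + 1 + s))
      = (u + 1 + s / 2) / (u + s / 2) := by
    rw [div_eq_div_iff (sub_pos.2 ((div_lt_one (by linarith)).2 (by linarith))).ne' (by linarith)]
    field_simp
    ring
  rw [e₁, e₂, div_mul_eq_mul_div, div_mul_eq_mul_div,
    div_lt_div_iff_of_pos_right (by linarith), one_mul] at key
  exact key

theorem rpow_one_sub_le_Gamma_add_one_div_Gamma_add {x s : ℝ} (hx : 0 < x) (hs₀ : 0 < s)
    (hs₁ : s < 1) : x ^ (1 - s) ≤ Gamma (x + 1) / Gamma (x + s) := by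
  have hΓ : 0 < Gamma x := Gamma_pos_of_pos hx
  have hconv : Gamma (x + s) ≤ Gamma x ^ (1 - s) * Gamma (x + 1) ^ s := by
    convert Gamma_mul_add_mul_le_rpow_Gamma_mul_rpow_Gamma hx (by linarith : 0 < x + 1)
      (by linarith : 0 < 1 - s) hs₀ (by ring) using 2
    ring
  have hrhs : Gamma x ^ (1 - s) * Gamma (x + 1) ^ s = Gamma (x + 1) / x ^ (1 - s) := by
    rw [Gamma_add_one hx.ne']
    calc Gamma x ^ (1 - s) * (x * Gamma x) ^ s = x ^ s * (Gamma x ^ (1 - s) * Gamma x ^ s) := by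
          rw [mul_rpow hx.le hΓ.le]; ring
      _ = x ^ s * Gamma x := by rw [← rpow_add hΓ, sub_add_cancel, rpow_one]
      _ = x * Gamma x / x ^ (1 - s) := by
          rw [rpow_sub hx, rpow_one]; field_simp
  rw [le_div_iff₀ (Gamma_pos_of_pos (by linarith)), ← le_div_iff₀' (by positivity), ← hrhs]
  exact hconv

theorem tendsto_div_add_const_atTop (c : ℝ) :
    Tendsto (fun y : ℝ => y / (y + c)) atTop (𝓝 1) := by
  have h : Tendsto (fun y : ℝ => 1 - c / (y + c)) atTop (𝓝 (1 - 0)) := tendsto_const_nhds.sub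
    (tendsto_const_nhds.div_atTop (tendsto_atTop_add_const_right _ c tendsto_id))
  rw [sub_zero] at h
  refine h.congr' ?_
  filter_upwards [eventually_gt_atTop (-c)] with y hy
  field_simp [(by linarith : y + c ≠ 0)]
  ring

noncomputable def kershawRatio (s x : ℝ) : ℝ :=
  Gamma (x + 1) / Gamma (x + s) / (x + s / 2) ^ (1 - s)

theorem kershawRatio_add_one_lt {s x : ℝ} (hx : 0 < x + s / 2) (hs₀ : 0 < s) (hs₁ : s < 1) :
    kershawRatio s (x + 1) < kershawRatio s x := by
  have hΓ : 0 < Gamma (x + 1) / Gamma (x + s) :=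
    div_pos (Gamma_pos_of_pos (by linarith)) (Gamma_pos_of_pos (by linarith))
  have hfactor : (x + 1) / (x + s) < ((x + 1 + s / 2) / (x + s / 2)) ^ (1 - s) := by
    rw [lt_rpow_iff_log_lt (by apply div_pos <;> linarith) (by apply div_pos <;> linarith)]
    exact log_div_add_lt_mul_log_div hx hs₀ hs₁
  rw [div_rpow (by linarith) hx.le, lt_div_iff₀ (rpow_pos_of_pos hx _)] at hfactor
  have hshift : kershawRatio s (x + 1) = (x + 1) / (x + s) * (Gamma (x + 1) / Gamma (x + s))
      / (x + 1 + s / 2) ^ (1 - s) := by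
    rw [kershawRatio, Gamma_add_one (s := x + 1) (by linarith), add_right_comm,
      Gamma_add_one (s := x + s) (by linarith)]
    field_simp
  rw [hshift, kershawRatio, div_lt_div_iff₀ (rpow_pos_of_pos (by linarith) _)
    (rpow_pos_of_pos hx _), mul_right_comm, mul_comm (Gamma _ / _)]
  exact mul_lt_mul_of_pos_right hfactor hΓ

theorem div_rpow_le_kershawRatio {s x : ℝ} (hx : 0 < x) (hs₀ : 0 < s) (hs₁ : s < 1) :
    (x / (x + s / 2)) ^ (1 - s) ≤ kershawRatio s x := by
  rw [div_rpow hx.le (by linarith), kershawRatio]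
  exact div_le_div_of_nonneg_right (rpow_one_sub_le_Gamma_add_one_div_Gamma_add hx hs₀ hs₁)
    (rpow_nonneg (by linarith) _)

theorem kershawRatio_add_nat_le {s x : ℝ} (hx : 0 < x + s / 2) (hs₀ : 0 < s) (hs₁ : s < 1) :
    ∀ n : ℕ, kershawRatio s (x + n) ≤ kershawRatio s x
  | 0 => by simp
  | n + 1 => by
    rw [Nat.cast_succ, ← add_assoc]
    exact (kershawRatio_add_one_lt (by linarith [n.cast_nonneg (α := ℝ)]) hs₀ hs₁).le.trans
      (kershawRatio_add_nat_le hx hs₀ hs₁ n)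

theorem one_le_kershawRatio {s x : ℝ} (hx : 0 < x) (hs₀ : 0 < s) (hs₁ : s < 1) :
    1 ≤ kershawRatio s x := by
  have hlim : Tendsto (fun n : ℕ => ((x + n) / (x + n + s / 2)) ^ (1 - s)) atTop (𝓝 1) := by
    simpa using ((tendsto_div_add_const_atTop (s / 2)).comp
      (tendsto_atTop_add_const_left _ x tendsto_natCast_atTop_atTop)).rpow_const
        (p := 1 - s) (Or.inl one_ne_zero)
  refine le_of_tendsto' hlim fun n => ?_
  exact (div_rpow_le_kershawRatio (by positivity) hs₀ hs₁).trans
    (kershawRatio_add_nat_le (by positivity) hs₀ hs₁ n)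

theorem kershaw (t s : ℝ) (ht : 0 < t) (hs : s ∈ Set.Ioo (0:ℝ) 1) :
    (t + s / 2) ^ (1 - s) < Real.Gamma (t + 1) / Real.Gamma (t + s) := by
  obtain ⟨hs₀, hs₁⟩ := hs
  have h := (one_le_kershawRatio (x := t + 1) (by linarith) hs₀ hs₁).trans_lt
    (kershawRatio_add_one_lt (by positivity) hs₀ hs₁)
  rwa [kershawRatio, one_lt_div (by positivity)] at h
end

section
/- Let X be a D-dimensional real vector space (D ≥ 1), α a linear functional on X, and C ⊆ X a compact convex set with max_{z∈C} |α(z)| = 1. Define C' := {z ∈ C : |α(z)| ≤ 1/(D+1)}. Then vol(C') ≤ (1 − e^{-2})·vol(C). -/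
/-!
Pick `z₀ ∈ C` with `α z₀ = ±1`; replacing `α` by `-α`, say `α z₀ = 1`. Put `c = 1/(D+1)` and
`s = (1 - c)/(1 + c) = D/(D+2)`. By convexity the homothety of centre `z₀` and ratio `s` maps
`B = C ∩ {α ≥ -c}` into `C ∩ {α ≥ c}`, so its image, of volume `s^D vol B`, lies in `B` and meets
the slab `C'` only inside the null hyperplane `{α = c}`. Hence `vol C' ≤ (1 - s^D) vol B`, and
`s^D = (1 + 2/D)^(-D) ≥ e^(-2)`.
-/

open MeasureTheory Set AffineMap Module

lemma exp_neg_two_le_div_add_two_pow (n : ℕ) : Real.exp (-2) ≤ ((n : ℝ) / (n + 2)) ^ n := by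
  rcases Nat.eq_zero_or_pos n with rfl | hn
  · simp [Real.exp_le_one_iff]
  have hn' : (0 : ℝ) < n := by exact_mod_cast hn
  have hpow : (1 + 2 / (n : ℝ)) ^ n ≤ Real.exp 2 := by
    simpa [sub_neg_eq_add, neg_div] using
      Real.one_sub_div_pow_le_exp_neg (n := n) (t := -2) (by linarith)
  calc Real.exp (-2) = (Real.exp 2)⁻¹ := Real.exp_neg 2
    _ ≤ ((1 + 2 / (n : ℝ)) ^ n)⁻¹ := inv_anti₀ (by positivity) hpow
    _ = ((n : ℝ) / (n + 2)) ^ n := by rw [← inv_pow]; congr 1; field_simp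

lemma ENNReal.le_ofReal_one_sub_mul_of_add_le {a b : ENNReal} {r : ℝ} (hr : 0 ≤ r) (hb : b ≠ ⊤)
    (h : a + ENNReal.ofReal r * b ≤ b) : a ≤ ENNReal.ofReal (1 - r) * b := by
  rw [ENNReal.ofReal_sub 1 hr, ENNReal.ofReal_one, ENNReal.sub_mul fun _ _ => hb, one_mul]
  exact ENNReal.le_sub_of_add_le_right (ENNReal.mul_ne_top ENNReal.ofReal_ne_top hb) h

section AddHaar

variable {E : Type*} [NormedAddCommGroup E] [NormedSpace ℝ E] [MeasurableSpace E] [BorelSpace E]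
  [FiniteDimensional ℝ E] (μ : Measure E) [μ.IsAddHaarMeasure]

lemma LinearMap.addHaar_preimage_singleton {β : E →ₗ[ℝ] ℝ} (hβ : β ≠ 0) (c : ℝ) :
    μ (β ⁻¹' {c}) = 0 := by
  let L : AffineSubspace ℝ E := (affineSpan ℝ {c}).comap β.toAffineMap
  have hL : (L : Set E) = β ⁻¹' {c} := by
    simp [L, AffineSubspace.coe_comap, AffineSubspace.coe_affineSpan_singleton]
  have hL_ne_top : L ≠ ⊤ := by
    intro htop
    have hfib : ∀ x, β x = c := fun x => by
      have hx : x ∈ (L : Set E) := htop ▸ AffineSubspace.mem_top ℝ E x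
      rwa [hL] at hx
    exact hβ (LinearMap.ext fun x => by simp [hfib x, ← hfib 0])
  rw [← hL]
  exact Measure.addHaar_affineSubspace μ L hL_ne_top

lemma addHaar_slab_le {β : E →ₗ[ℝ] ℝ} {C : Set E} (hC : IsCompact C) (hconv : Convex ℝ C)
    {z₀ : E} (hz₀C : z₀ ∈ C) (hz₀ : β z₀ = 1) {c : ℝ} (hc₀ : 0 ≤ c) (hc₁ : c ≤ 1) :
    μ {z ∈ C | |β z| ≤ c} ≤ ENNReal.ofReal (1 - ((1 - c) / (1 + c)) ^ finrank ℝ E) * μ C := by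
  set s := (1 - c) / (1 + c)
  have hs₀ : 0 ≤ s := div_nonneg (by linarith) (by linarith)
  have hs₁ : s ≤ 1 := div_le_one_of_le₀ (by linarith) (by linarith)
  set B := C ∩ {z | -c ≤ β z}
  set H := homothety z₀ s '' B
  have hβ_homothety : ∀ z, β (homothety z₀ s z) = s * (β z - 1) + 1 := fun z => by
    simp [homothety_apply, hz₀]
  have hH : H ⊆ C ∩ {z | c ≤ β z} := by
    rintro _ ⟨z, ⟨hzC, hzc⟩, rfl⟩
    refine ⟨homothety_eq_lineMap z₀ s z ▸ hconv.lineMap_mem hz₀C hzC ⟨hs₀, hs₁⟩, ?_⟩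
    have hs_mul : s * (1 + c) = 1 - c := div_mul_cancel₀ _ (by linarith)
    change c ≤ β (homothety z₀ s z)
    rw [hβ_homothety]
    nlinarith [hs_mul, mul_nonneg hs₀ (show 0 ≤ β z + c by linarith [show -c ≤ β z from hzc])]
  have hslab_B : {z ∈ C | |β z| ≤ c} ⊆ B := fun z hz => ⟨hz.1, neg_le_of_abs_le hz.2⟩
  have hH_B : H ⊆ B := fun z hz => ⟨(hH hz).1, (neg_le_self hc₀).trans (hH hz).2⟩
  have hdisj : AEDisjoint μ {z ∈ C | |β z| ≤ c} H := by
    have hβ0 : β ≠ 0 := fun h => by simp [h] at hz₀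
    refine measure_mono_null (fun z hz => ?_) (β.addHaar_preimage_singleton μ hβ0 c)
    exact le_antisymm (le_of_abs_le hz.1.2) (hH hz.2).2
  have hB : IsCompact B :=
    hC.inter_right (isClosed_le continuous_const β.continuous_of_finiteDimensional)
  have hH_meas : MeasurableSet H :=
    (hB.image (homothety_continuous z₀ s)).measurableSet
  have hcover : μ {z ∈ C | |β z| ≤ c} + ENNReal.ofReal (s ^ finrank ℝ E) * μ B ≤ μ B := by
    rw [← abs_of_nonneg (pow_nonneg hs₀ _), ← Measure.addHaar_image_homothety μ z₀,
      ← measure_union₀ hH_meas.nullMeasurableSet hdisj]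
    exact measure_mono (union_subset hslab_B hH_B)
  calc μ {z ∈ C | |β z| ≤ c}
      ≤ ENNReal.ofReal (1 - s ^ finrank ℝ E) * μ B :=
        ENNReal.le_ofReal_one_sub_mul_of_add_le (by positivity) hB.measure_lt_top.ne hcover
    _ ≤ ENNReal.ofReal (1 - s ^ finrank ℝ E) * μ C := by gcongr; exact inter_subset_left

end AddHaar

theorem slice_volume_reduction_general {X : Type*} [NormedAddCommGroup X] [NormedSpace ℝ X]
    [MeasurableSpace X] [BorelSpace X] [FiniteDimensional ℝ X]
    (μ : MeasureTheory.Measure X) [μ.IsAddHaarMeasure]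
    (D : ℕ) (hdim : Module.finrank ℝ X = D)
    (α : X →ₗ[ℝ] ℝ) (C : Set X) (hC : IsCompact C) (hconv : Convex ℝ C)
    (hmax : IsGreatest ((fun z => |α z|) '' C) 1) :
    μ {z ∈ C | |α z| ≤ 1 / (D + 1)} ≤
      ENNReal.ofReal (1 - Real.exp (-2)) * μ C := by
  obtain ⟨z₀, hz₀C, hz₀⟩ := hmax.1
  have hc₀ : (0 : ℝ) ≤ 1 / (D + 1) := by positivity
  have hc₁ : 1 / ((D : ℝ) + 1) ≤ 1 := div_le_one_of_le₀ (by simp) (by positivity)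
  have hratio : (1 - 1 / ((D : ℝ) + 1)) / (1 + 1 / (D + 1)) = D / (D + 2) := by
    field_simp; ring
  have hslab : ∀ β : X →ₗ[ℝ] ℝ, β z₀ = 1 → μ {z ∈ C | |β z| ≤ 1 / (D + 1)} ≤
      ENNReal.ofReal (1 - Real.exp (-2)) * μ C := fun β hβ => by
    refine (addHaar_slab_le μ hC hconv hz₀C hβ hc₀ hc₁).trans ?_
    rw [hratio, hdim]
    gcongr
    exact exp_neg_two_le_div_add_two_pow D
  rcases (abs_eq zero_le_one).1 hz₀ with h | h
  · exact hslab α h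
  · simpa using hslab (-α) (by simp [h])

theorem slice_volume_reduction {X : Type*} [NormedAddCommGroup X] [NormedSpace ℝ X]
    [MeasurableSpace X] [BorelSpace X] [FiniteDimensional ℝ X]
    (μ : MeasureTheory.Measure X) [μ.IsAddHaarMeasure]
    (D : ℕ) (hD : 1 ≤ D) (hdim : Module.finrank ℝ X = D)
    (α : X →ₗ[ℝ] ℝ) (C : Set X) (hC : IsCompact C) (hconv : Convex ℝ C)
    (hmax : IsGreatest ((fun z => |α z|) '' C) 1) :
    μ {z ∈ C | |α z| ≤ 1 / (D + 1)} ≤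
      ENNReal.ofReal (1 - Real.exp (-2)) * μ C :=
  slice_volume_reduction_general μ D hdim α C hC hconv hmax
end

section
/- Let D ≥ 1 and C ⊆ R^D a compact convex set. Let w be the minimal width of C, i.e., w := min over unit vectors α of (max_{z∈C} αᵀz − min_{z∈C} αᵀz). Then vol(C) ≥ (w/(2D))^D · v_D, where v_D is the volume of the unit ball in R^D. -/
/-!
Instead of John's ellipsoid we inscribe a ball. Let `c ∈ C` maximise the inradius
`r(c) = min_{‖u‖ = 1} (h_C(u) - ⟪u, c⟫)`, where `h_C` is the support function, so that
`closedBall c r ⊆ C`. If the contact directions `u` (those attaining the minimum) all made an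
obtuse angle with some `v`, moving `c` along `v` would increase the inradius; hence `0` lies in the
closed convex hull of the contact directions. By Carathéodory, `0` is approximated by
`∑ μᵢ uᵢ` with at most `D + 1` terms, and in each direction `uᵢ` the width is at most `r / μᵢ`
(up to the approximation error). Summing `μᵢ w ≤ r` gives `w ≤ (D + 1) r ≤ 2 D r`, so `C`
contains a ball of radius `w / (2 D)`.
-/

open Metric Set Module MeasureTheory
open scoped RealInnerProductSpace

noncomputable section

variable {E : Type*} [NormedAddCommGroup E] [InnerProductSpace ℝ E] {C : Set E}

def supportFun (C : Set E) (u : E) : ℝ := sSup ((fun z => ⟪u, z⟫) '' C)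

def width (C : Set E) (u : E) : ℝ := supportFun C u - sInf ((fun z => ⟪u, z⟫) '' C)

/-- For `c ∈ C`, the radius of the largest ball about `c` contained in `C`. -/
def inradiusAt (C : Set E) (c : E) : ℝ :=
  sInf ((fun u => supportFun C u - ⟪u, c⟫) '' sphere 0 1)

/-- The inequality is an equality, by `inradiusAt_le`. -/
def contactSet (C : Set E) (c : E) : Set E :=
  {u | ‖u‖ = 1 ∧ supportFun C u - ⟪u, c⟫ ≤ inradiusAt C c}

lemma exists_forall_inner_lt_inner [CompleteSpace E] {K : Set E} {x : E} (hconv : Convex ℝ K)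
    (hclosed : IsClosed K) (hx : x ∉ K) : ∃ v : E, ∀ y ∈ K, ⟪v, y⟫ < ⟪v, x⟫ := by
  obtain ⟨f, s, hfK, hfx⟩ := geometric_hahn_banach_closed_point hconv hclosed hx
  refine ⟨(InnerProductSpace.toDual ℝ E).symm f, fun y hy => ?_⟩
  simp only [InnerProductSpace.toDual_symm_apply]
  exact (hfK y hy).trans hfx

lemma inner_le_supportFun (hC : IsCompact C) {z : E} (hz : z ∈ C) (u : E) :
    ⟪u, z⟫ ≤ supportFun C u :=
  le_csSup (hC.image (by fun_prop)).bddAbove (mem_image_of_mem _ hz)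

lemma exists_supportFun_eq (hC : IsCompact C) (hne : C.Nonempty) (u : E) :
    ∃ z ∈ C, supportFun C u = ⟪u, z⟫ := by
  obtain ⟨z, hz, hzu⟩ :=
    (hC.image (by fun_prop : Continuous fun z => ⟪u, z⟫)).sSup_mem (hne.image _)
  exact ⟨z, hz, hzu.symm⟩

lemma continuous_supportFun (hC : IsCompact C) : Continuous (supportFun C) :=
  hC.continuous_sSup continuous_inner

lemma continuous_supportFun_sub_inner (hC : IsCompact C) (c : E) :
    Continuous fun u => supportFun C u - ⟪u, c⟫ := by
  have := continuous_supportFun hC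
  fun_prop

lemma mul_le_of_le_width {ι : Type*} [Fintype ι] (hC : IsCompact C) (hne : C.Nonempty) {c : E}
    (hc : c ∈ C) {r w : ℝ} {u : ι → E} {μ : ι → ℝ} (hμ : ∀ i, 0 ≤ μ i) (hμ1 : ∑ i, μ i = 1)
    (hcontact : ∀ i, supportFun C (u i) - ⟪u i, c⟫ ≤ r) (hw : ∀ i, w ≤ width C (u i)) (i : ι) :
    μ i * w ≤ r + ‖∑ k, μ k • u k‖ * diam C := by
  obtain ⟨z, hz, hzi⟩ :=
    (hC.image (by fun_prop : Continuous fun z => ⟪u i, z⟫)).sInf_mem (hne.image _)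
  have hgap : ∀ k, 0 ≤ r - ⟪u k, z - c⟫ := fun k => by
    rw [inner_sub_right]
    linarith [inner_le_supportFun hC hz (u k), hcontact k]
  have hwi : w ≤ r - ⟪u i, z - c⟫ := by
    calc w ≤ width C (u i) := hw i
      _ = supportFun C (u i) - ⟪u i, z⟫ := by rw [width, ← hzi]
      _ ≤ r - ⟪u i, z - c⟫ := by rw [inner_sub_right]; linarith [hcontact i]
  have hsum : ∑ k, μ k * (r - ⟪u k, z - c⟫) = r - ⟪∑ k, μ k • u k, z - c⟫ := by
    simp only [mul_sub, Finset.sum_sub_distrib, ← Finset.sum_mul, hμ1, one_mul, sum_inner,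
      real_inner_smul_left]
  have hdiam : ‖z - c‖ ≤ diam C := by
    rw [← dist_eq_norm]
    exact dist_le_diam_of_mem hC.isBounded hz hc
  calc μ i * w ≤ μ i * (r - ⟪u i, z - c⟫) := mul_le_mul_of_nonneg_left hwi (hμ i)
    _ ≤ ∑ k, μ k * (r - ⟪u k, z - c⟫) :=
      Finset.single_le_sum (fun k _ => mul_nonneg (hμ k) (hgap k)) (Finset.mem_univ i)
    _ = r + ⟪∑ k, μ k • u k, -(z - c)⟫ := by rw [hsum, inner_neg_right, sub_eq_add_neg]
    _ ≤ r + ‖∑ k, μ k • u k‖ * diam C := by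
      gcongr
      exact (real_inner_le_norm _ _).trans (by rw [norm_neg]; gcongr)

variable [ProperSpace E]

lemma continuous_inradiusAt (hC : IsCompact C) : Continuous (inradiusAt C) :=
  (isCompact_sphere 0 1).continuous_sInf <| by
    have := continuous_supportFun hC
    fun_prop

lemma inradiusAt_le (hC : IsCompact C) (c : E) {u : E} (hu : ‖u‖ = 1) :
    inradiusAt C c ≤ supportFun C u - ⟪u, c⟫ :=
  csInf_le ((isCompact_sphere 0 1).image (continuous_supportFun_sub_inner hC c)).bddBelow
    (mem_image_of_mem _ (mem_sphere_zero_iff_norm.2 hu))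

lemma exists_inradiusAt_eq [Nontrivial E] (hC : IsCompact C) (c : E) :
    ∃ u, ‖u‖ = 1 ∧ inradiusAt C c = supportFun C u - ⟪u, c⟫ := by
  obtain ⟨u, hu, hcu⟩ :=
    ((isCompact_sphere 0 1).image (continuous_supportFun_sub_inner hC c)).sInf_mem
      ((NormedSpace.sphere_nonempty.2 zero_le_one).image _)
  exact ⟨u, mem_sphere_zero_iff_norm.1 hu, hcu.symm⟩

lemma inradiusAt_nonneg [Nontrivial E] (hC : IsCompact C) {c : E} (hc : c ∈ C) :
    0 ≤ inradiusAt C c := by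
  obtain ⟨u, -, hu⟩ := exists_inradiusAt_eq hC c
  rw [hu, sub_nonneg]
  exact inner_le_supportFun hC hc u

lemma closedBall_inradiusAt_subset (hC : IsCompact C) (hconv : Convex ℝ C) (hne : C.Nonempty)
    (c : E) : closedBall c (inradiusAt C c) ⊆ C := by
  intro x hx
  by_contra hxC
  obtain ⟨v, hv⟩ := exists_forall_inner_lt_inner hconv hC.isClosed hxC
  have hv0 : v ≠ 0 := by
    rintro rfl
    obtain ⟨a, ha⟩ := hne
    simpa using hv a ha
  set u := ‖v‖⁻¹ • v
  have hu : ‖u‖ = 1 := norm_smul_inv_norm hv0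
  obtain ⟨z, hz, hzu⟩ := exists_supportFun_eq hC hne u
  have hzx : ⟪u, z⟫ < ⟪u, x⟫ := by
    simp only [u, real_inner_smul_left]
    exact mul_lt_mul_of_pos_left (hv z hz) (by positivity)
  have hxc : ⟪u, x - c⟫ ≤ inradiusAt C c :=
    calc ⟪u, x - c⟫ ≤ ‖u‖ * ‖x - c‖ := real_inner_le_norm _ _
      _ ≤ inradiusAt C c := by rw [hu, one_mul, ← dist_eq_norm]; exact hx
  rw [inner_sub_right] at hxc
  linarith [inradiusAt_le hC c hu]

lemma exists_inradiusAt_lt [Nontrivial E] (hC : IsCompact C) {c v : E}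
    (hv : ∀ u ∈ contactSet C c, ⟪v, u⟫ < 0) :
    ∃ τ : ℝ, inradiusAt C c < inradiusAt C (c + τ • v) := by
  set r := inradiusAt C c
  set K := sphere (0 : E) 1 ∩ {u | 0 ≤ ⟪v, u⟫}
  have hK : IsCompact K :=
    (isCompact_sphere 0 1).inter_right (isClosed_le (by fun_prop) (by fun_prop))
  have hrK : ∀ u ∈ K, r < supportFun C u - ⟪u, c⟫ := fun u ⟨hu, hvu⟩ =>
    lt_of_not_ge fun hle => (hv u ⟨mem_sphere_zero_iff_norm.1 hu, hle⟩).not_ge hvu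
  -- Away from the contact directions the gap is at least `a - r > 0`, which a small step absorbs.
  obtain ⟨a, hra, haK⟩ :=
    hK.exists_forall_le' (continuous_supportFun_sub_inner hC c).continuousOn hrK
  set τ := (a - r) / (‖v‖ + 1)
  have hτ : 0 < τ := div_pos (sub_pos.2 hra) (by positivity)
  have hτv : τ * ‖v‖ < a - r := by
    rw [div_mul_eq_mul_div, div_lt_iff₀ (by positivity)]
    nlinarith
  refine ⟨τ, ?_⟩
  obtain ⟨u, hu, hcu⟩ := exists_inradiusAt_eq hC (c + τ • v)
  rw [hcu, inner_add_right, real_inner_smul_right, real_inner_comm v u]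
  rcases lt_or_ge ⟪v, u⟫ 0 with hvu | hvu
  · nlinarith [inradiusAt_le hC c hu]
  · have hvu' : ⟪v, u⟫ ≤ ‖v‖ := by simpa [hu] using real_inner_le_norm v u
    nlinarith [haK u ⟨mem_sphere_zero_iff_norm.2 hu, hvu⟩]

lemma zero_mem_closure_convexHull_contactSet [Nontrivial E] (hC : IsCompact C)
    (hconv : Convex ℝ C) (hne : C.Nonempty) {c : E} (hc : c ∈ C)
    (hmax : IsMaxOn (inradiusAt C) C c) : (0 : E) ∈ closure (convexHull ℝ (contactSet C c)) := by
  by_contra h0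
  obtain ⟨v, hv⟩ :=
    exists_forall_inner_lt_inner (convex_convexHull ℝ _).closure isClosed_closure h0
  obtain ⟨τ, hτ⟩ := exists_inradiusAt_lt hC (v := v) fun u hu => by
    simpa using hv u (subset_closure (subset_convexHull ℝ _ hu))
  have hpos : 0 ≤ inradiusAt C (c + τ • v) := (inradiusAt_nonneg hC hc).trans hτ.le
  exact (hmax (closedBall_inradiusAt_subset hC hconv hne _ (mem_closedBall_self hpos))).not_gt hτ

variable [FiniteDimensional ℝ E]

lemma width_le_of_zero_mem_closure_convexHull [Nontrivial E] (hC : IsCompact C)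
    (hne : C.Nonempty) {c : E} (hc : c ∈ C)
    (h0 : (0 : E) ∈ closure (convexHull ℝ (contactSet C c))) {w : ℝ}
    (hw : ∀ u, ‖u‖ = 1 → w ≤ width C u) : w ≤ (finrank ℝ E + 1) * inradiusAt C c := by
  set r := inradiusAt C c
  have hr : 0 ≤ r := inradiusAt_nonneg hC hc
  suffices h : convexHull ℝ (contactSet C c) ⊆
      {x | w ≤ (finrank ℝ E + 1) * (r + ‖x‖ * diam C)} by
    simpa using closure_minimal h (isClosed_le continuous_const (by fun_prop)) h0
  intro x hx
  obtain ⟨ι, _, u, μ, hu, hind, hμ, hμ1, rfl⟩ := eq_pos_convex_span_of_mem_convexHull hx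
  have hcard : (Fintype.card ι : ℝ) ≤ finrank ℝ E + 1 := by
    exact_mod_cast hind.card_le_finrank_succ.trans (Nat.succ_le_succ (Submodule.finrank_le _))
  have hu' : ∀ i, u i ∈ contactSet C c := fun i => hu (mem_range_self i)
  calc w = ∑ i, μ i * w := by rw [← Finset.sum_mul, hμ1, one_mul]
    _ ≤ ∑ _i : ι, (r + ‖∑ k, μ k • u k‖ * diam C) := Finset.sum_le_sum fun i _ =>
        mul_le_of_le_width hC hne hc (fun k => (hμ k).le) hμ1 (fun k => (hu' k).2)
          (fun k => hw _ (hu' k).1) i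
    _ ≤ (finrank ℝ E + 1) * (r + ‖∑ k, μ k • u k‖ * diam C) := by
        rw [Finset.sum_const, Finset.card_univ, nsmul_eq_mul]
        gcongr

theorem exists_closedBall_subset_of_le_width [Nontrivial E] (hC : IsCompact C)
    (hconv : Convex ℝ C) (hne : C.Nonempty) {w : ℝ} (hw : ∀ u, ‖u‖ = 1 → w ≤ width C u) :
    ∃ c, closedBall c (w / (finrank ℝ E + 1)) ⊆ C := by
  obtain ⟨c, hc, hmax⟩ := hC.exists_isMaxOn hne (continuous_inradiusAt hC).continuousOn
  have hwr := width_le_of_zero_mem_closure_convexHull hC hne hc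
    (zero_mem_closure_convexHull_contactSet hC hconv hne hc hmax) hw
  refine ⟨c, (closedBall_subset_closedBall ?_).trans (closedBall_inradiusAt_subset hC hconv hne c)⟩
  rwa [div_le_iff₀' (by positivity)]

end

theorem volume_ge_of_min_width (D : ℕ) (hD : 1 ≤ D)
    (C : Set (EuclideanSpace ℝ (Fin D))) (hC : IsCompact C) (hconv : Convex ℝ C)
    (w : ℝ)
    (hw : IsLeast { x : ℝ | ∃ α : EuclideanSpace ℝ (Fin D), ‖α‖ = 1 ∧
        x = sSup ((fun z => (inner ℝ α z : ℝ)) '' C) - sInf ((fun z => (inner ℝ α z : ℝ)) '' C) } w) :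
    ENNReal.ofReal ((w / (2 * D)) ^ D) *
        MeasureTheory.volume (Metric.ball (0 : EuclideanSpace ℝ (Fin D)) 1)
      ≤ MeasureTheory.volume C := by
  obtain ⟨α, -, hwα⟩ := hw.1
  have hw0 : 0 ≤ w := by
    have hbdd := hC.image (by fun_prop : Continuous fun z => ⟪α, z⟫)
    rw [hwα, sub_nonneg]
    exact Real.sInf_le_sSup _ hbdd.bddBelow hbdd.bddAbove
  rcases C.eq_empty_or_nonempty with rfl | hne
  · simp [hwα, Nat.one_le_iff_ne_zero.1 hD]
  have : Nontrivial (EuclideanSpace ℝ (Fin D)) :=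
    Module.nontrivial_of_finrank_pos (by rw [finrank_euclideanSpace_fin]; omega)
  obtain ⟨c, hc⟩ := exists_closedBall_subset_of_le_width hC hconv hne fun u hu => hw.2 ⟨u, hu, rfl⟩
  have hradius : w / (2 * D) ≤ w / (finrank ℝ (EuclideanSpace ℝ (Fin D)) + 1) := by
    rw [finrank_euclideanSpace_fin]
    gcongr
    norm_cast
    omega
  calc ENNReal.ofReal ((w / (2 * D)) ^ D) * volume (ball (0 : EuclideanSpace ℝ (Fin D)) 1)
      = volume (ball c (w / (2 * D))) := by
        rw [Measure.addHaar_ball _ c (by positivity), finrank_euclideanSpace_fin]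
    _ ≤ volume C := measure_mono <|
        ball_subset_closedBall.trans ((closedBall_subset_closedBall hradius).trans hc)
end

section
/- Let D ≥ 1, E ≥ 0, δ > 0, C ⊆ R^D × [−δ,+δ]^E compact, and α ∈ R^{D+E} with ‖α‖₂ ≤ 1. Let ρ₀ := max_{z∈C} |αᵀz|, C' := {z ∈ C : |αᵀz| ≤ ρ₀/(2(D+1))}, P : R^{D+E} → R^D the orthogonal projection onto the first D coordinates, ρ₁ := max_{z∈C} |αᵀPz| and ρ₁' := max_{z∈C'} |αᵀPz|. If ρ₀ ≥ (4D+5)√E·δ, then ρ₁' ≤ ρ₁/(D+1). -/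
/-!
Replacing a point `z` of `C` by its projection `P z` moves `αᵀz` by at most `β := √E δ`, by
Cauchy–Schwarz on the last `E` coordinates. Hence `ρ₁ ≥ ρ₀ - β`, while every point of the slice
`C'` has `|αᵀ P z| ≤ ρ₀ / (2(D+1)) + β`; the hypothesis `(4D+5) β ≤ ρ₀` makes the second bound at
most `1/(D+1)` times the first.
-/

open Finset

theorem sum_abs_le_sqrt_card {ι : Type*} (s : Finset ι) {a : ι → ℝ}
    (ha : ∑ i ∈ s, a i ^ 2 ≤ 1) : ∑ i ∈ s, |a i| ≤ √(#s) :=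
  calc ∑ i ∈ s, |a i| = ∑ i ∈ s, |a i| * 1 := by simp only [mul_one]
    _ ≤ √(∑ i ∈ s, |a i| ^ 2) * √(∑ i ∈ s, (1 : ℝ) ^ 2) := Real.sum_mul_le_sqrt_mul_sqrt _ _ _
    _ ≤ 1 * √(#s) := by
        simp only [sq_abs, one_pow, sum_const, nsmul_eq_mul, mul_one]
        gcongr
        exact Real.sqrt_le_one.mpr ha
    _ = √(#s) := one_mul _

theorem abs_sum_mul_le_sqrt_card_mul {ι : Type*} (s : Finset ι) {a b : ι → ℝ} {δ : ℝ}
    (hδ : 0 ≤ δ) (ha : ∑ i ∈ s, a i ^ 2 ≤ 1) (hb : ∀ i ∈ s, |b i| ≤ δ) :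
    |∑ i ∈ s, a i * b i| ≤ √(#s) * δ :=
  calc |∑ i ∈ s, a i * b i| ≤ ∑ i ∈ s, |a i| * |b i| := by
        simpa only [abs_mul] using abs_sum_le_sum_abs (fun i => a i * b i) s
    _ ≤ ∑ i ∈ s, |a i| * δ := by gcongr with i hi; exact hb i hi
    _ = (∑ i ∈ s, |a i|) * δ := (sum_mul ..).symm
    _ ≤ √(#s) * δ := by gcongr; exact sum_abs_le_sqrt_card s ha

theorem sum_mul_sub_sum_mul_ite {ι : Type*} [Fintype ι] (p : ι → Prop) [DecidablePred p]
    (a z : ι → ℝ) :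
    ∑ i, a i * z i - ∑ i, a i * (if p i then z i else 0) = ∑ i with ¬ p i, a i * z i := by
  rw [← sum_sub_distrib, sum_filter]
  refine sum_congr rfl fun i _ => ?_
  split_ifs <;> ring

theorem abs_sum_mul_sub_sum_mul_ite_le {ι : Type*} [Fintype ι] (p : ι → Prop) [DecidablePred p]
    {a z : ι → ℝ} {δ : ℝ} (hδ : 0 ≤ δ) (ha : ∑ i, a i ^ 2 ≤ 1)
    (hz : ∀ i, ¬ p i → |z i| ≤ δ) :
    |∑ i, a i * z i - ∑ i, a i * (if p i then z i else 0)| ≤ √(#{i | ¬ p i}) * δ := by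
  rw [sum_mul_sub_sum_mul_ite]
  refine abs_sum_mul_le_sqrt_card_mul _ hδ ?_ fun i hi => hz i (mem_filter.mp hi).2
  exact (sum_le_sum_of_subset_of_nonneg (filter_subset _ _) fun i _ _ => sq_nonneg _).trans ha

theorem card_filter_not_val_lt (D E : ℕ) : #{i : Fin (D + E) | ¬ (i : ℕ) < D} = E := by
  rw [card_filter, Fin.sum_univ_add]
  simp

section Perturbation

variable {X : Type*} {f g : X → ℝ} {C : Set X} {β : ℝ}

theorem sub_le_of_abs_sub_le {ρ₀ ρ₁ : ℝ} (hfg : ∀ z ∈ C, |f z - g z| ≤ β)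
    (hρ₀ : ρ₀ ∈ (fun z => |f z|) '' C) (hρ₁ : ρ₁ ∈ upperBounds ((fun z => |g z|) '' C)) :
    ρ₀ - β ≤ ρ₁ := by
  obtain ⟨z, hz, rfl⟩ := hρ₀
  have hgz : |g z| ≤ ρ₁ := hρ₁ ⟨z, hz, rfl⟩
  linarith [abs_sub_abs_le_abs_sub (f z) (g z), hfg z hz]

theorem le_add_of_abs_sub_le {ρ t : ℝ} (hfg : ∀ z ∈ C, |f z - g z| ≤ β)
    (hρ : ρ ∈ (fun z => |g z|) '' {z ∈ C | |f z| ≤ t}) : ρ ≤ t + β := by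
  obtain ⟨z, ⟨hz, hzt⟩, rfl⟩ := hρ
  linarith [abs_sub_abs_le_abs_sub (g z) (f z), abs_sub_comm (f z) (g z), hfg z hz]

end Perturbation

theorem le_div_add_one_of_margin {n β ρ₀ ρ₁ ρ₁' : ℝ} (hn : 0 ≤ n) (hβ : 0 ≤ β)
    (hρ₁ : ρ₀ - β ≤ ρ₁) (hρ₁' : ρ₁' ≤ ρ₀ / (2 * (n + 1)) + β) (hbig : (4 * n + 5) * β ≤ ρ₀) :
    ρ₁' ≤ ρ₁ / (n + 1) := by
  have hn1 : 0 < n + 1 := by linarith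
  rw [le_div_iff₀ hn1]
  have hslice : ρ₀ / (2 * (n + 1)) * (n + 1) = ρ₀ / 2 := by field_simp
  nlinarith [mul_le_mul_of_nonneg_right hρ₁' hn1.le, mul_nonneg hβ hn]

theorem thin_slice_projection_general (D E : ℕ) (δ : ℝ) (hδ : 0 < δ)
    (C : Set (Fin (D + E) → ℝ))
    (hCbox : ∀ z ∈ C, ∀ i : Fin (D + E), D ≤ (i : ℕ) → |z i| ≤ δ)
    (α : Fin (D + E) → ℝ) (hα : ∑ i, (α i) ^ 2 ≤ 1)
    (ρ₀ ρ₁ ρ₁' : ℝ)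
    (h₀ : IsGreatest ((fun z => |∑ i, α i * z i|) '' C) ρ₀)
    (h₁ : IsGreatest ((fun z => |∑ i, α i * (if (i : ℕ) < D then z i else 0)|) '' C) ρ₁)
    (h₁' : IsGreatest ((fun z => |∑ i, α i * (if (i : ℕ) < D then z i else 0)|) ''
        {z ∈ C | |∑ i, α i * z i| ≤ ρ₀ / (2 * (D + 1))}) ρ₁')
    (hbig : (4 * D + 5) * Real.sqrt E * δ ≤ ρ₀) :
    ρ₁' ≤ ρ₁ / (D + 1) := by
  have hproj : ∀ z ∈ C, |∑ i, α i * z i - ∑ i, α i * (if (i : ℕ) < D then z i else 0)|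
      ≤ √E * δ := fun z hz => by
    simpa only [card_filter_not_val_lt] using abs_sum_mul_sub_sum_mul_ite_le
      (fun i : Fin (D + E) => (i : ℕ) < D) hδ.le hα fun i hi => hCbox z hz i (not_lt.mp hi)
  exact le_div_add_one_of_margin D.cast_nonneg (by positivity)
    (sub_le_of_abs_sub_le hproj h₀.1 h₁.2) (le_add_of_abs_sub_le hproj h₁'.1)
    (by rwa [← mul_assoc])

theorem thin_slice_projection (D E : ℕ) (hD : 1 ≤ D) (δ : ℝ) (hδ : 0 < δ)
    (C : Set (Fin (D + E) → ℝ)) (hC : IsCompact C)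
    (hCbox : ∀ z ∈ C, ∀ i : Fin (D + E), D ≤ (i : ℕ) → |z i| ≤ δ)
    (α : Fin (D + E) → ℝ) (hα : ∑ i, (α i) ^ 2 ≤ 1)
    (ρ₀ ρ₁ ρ₁' : ℝ) (hρ₀pos : 0 < ρ₀)
    (h₀ : IsGreatest ((fun z => |∑ i, α i * z i|) '' C) ρ₀)
    (h₁ : IsGreatest ((fun z => |∑ i, α i * (if (i : ℕ) < D then z i else 0)|) '' C) ρ₁)
    (h₁' : IsGreatest ((fun z => |∑ i, α i * (if (i : ℕ) < D then z i else 0)|) ''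
        {z ∈ C | |∑ i, α i * z i| ≤ ρ₀ / (2 * (D + 1))}) ρ₁')
    (hbig : (4 * D + 5) * Real.sqrt E * δ ≤ ρ₀) :
    ρ₁' ≤ ρ₁ / (D + 1) :=
  thin_slice_projection_general D E δ hδ C hCbox α hα ρ₀ ρ₁ ρ₁' h₀ h₁ h₁' hbig
end

section
/- Let B be a finite set, y ∈ R^B with Σ_a y_a = 1, and ξ ∈ Δ(B) a probability vector such that for each a ∈ B: if y_a < 0 then ξ_a = 0, and if y_a ≥ 0 then ξ_a ≤ y_a. Then ‖y − ξ‖₁ = d₁(y, Δ(B)). -/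
/-! Termwise, `|y a| - y' a ≤ |y a - y' a|` whenever `y' a ≥ 0`, so summing over a probability
vector `y'` bounds its ℓ¹ distance to `y` below by `∑ a, |y a| - 1`. The conditions on `ξ` are
exactly those making each of these termwise inequalities an equality, so `ξ` attains the bound. -/

open Finset

lemma abs_sub_abs_sub_le_of_nonneg {x z : ℝ} (hz : 0 ≤ z) : |x| - z ≤ |x - z| := by
  simpa only [abs_of_nonneg hz] using abs_sub_abs_le_abs_sub x z

lemma abs_sub_eq_abs_sub {x z : ℝ} (hneg : x < 0 → z = 0) (hle : 0 ≤ x → z ≤ x) :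
    |x - z| = |x| - z := by
  rcases lt_or_ge x 0 with hx | hx
  · simp [hneg hx]
  · rw [abs_of_nonneg (sub_nonneg.2 (hle hx)), abs_of_nonneg hx]

section

variable {ι : Type*} (s : Finset ι) (y : ι → ℝ)

lemma sum_abs_sub_sum_le_sum_abs_sub {y' : ι → ℝ} (h0 : ∀ a ∈ s, 0 ≤ y' a) :
    ∑ a ∈ s, |y a| - ∑ a ∈ s, y' a ≤ ∑ a ∈ s, |y a - y' a| := by
  rw [← sum_sub_distrib]
  exact sum_le_sum fun a ha => abs_sub_abs_sub_le_of_nonneg (h0 a ha)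

lemma sum_abs_sub_eq_sum_abs_sub_sum {ξ : ι → ℝ}
    (hcond : ∀ a ∈ s, (y a < 0 → ξ a = 0) ∧ (0 ≤ y a → ξ a ≤ y a)) :
    ∑ a ∈ s, |y a - ξ a| = ∑ a ∈ s, |y a| - ∑ a ∈ s, ξ a := by
  rw [← sum_sub_distrib]
  exact sum_congr rfl fun a ha => abs_sub_eq_abs_sub (hcond a ha).1 (hcond a ha).2

end

theorem simplex_projection_dist_general (B : Type*) [Fintype B]
    (y ξ : B → ℝ)
    (hξ : (∀ a, 0 ≤ ξ a) ∧ ∑ a, ξ a = 1)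
    (hcond : ∀ a, (y a < 0 → ξ a = 0) ∧ (0 ≤ y a → ξ a ≤ y a)) :
    ∑ a, |y a - ξ a| =
      sInf {d : ℝ | ∃ y' : B → ℝ, (∀ a, 0 ≤ y' a) ∧ (∑ a, y' a = 1) ∧
        d = ∑ a, |y a - y' a|} := by
  obtain ⟨hξ0, hξ1⟩ := hξ
  have hξ_dist : ∑ a, |y a - ξ a| = ∑ a, |y a| - 1 := by
    rw [sum_abs_sub_eq_sum_abs_sub_sum _ y fun a _ => hcond a, hξ1]
  refine (IsLeast.csInf_eq ⟨?_, ?_⟩).symm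
  · exact ⟨ξ, hξ0, hξ1, rfl⟩
  · rintro d ⟨y', h0, h1, rfl⟩
    rw [hξ_dist, ← h1]
    exact sum_abs_sub_sum_le_sum_abs_sub _ y fun a _ => h0 a

theorem simplex_projection_dist (B : Type*) [Fintype B]
    (y ξ : B → ℝ) (hy : ∑ a, y a = 1)
    (hξ : (∀ a, 0 ≤ ξ a) ∧ ∑ a, ξ a = 1)
    (hcond : ∀ a, (y a < 0 → ξ a = 0) ∧ (0 ≤ y a → ξ a ≤ y a)) :
    ∑ a, |y a - ξ a| =
      sInf {d : ℝ | ∃ y' : B → ℝ, (∀ a, 0 ≤ y' a) ∧ (∑ a, y' a = 1) ∧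
        d = ∑ a, |y a - y' a|} :=
  simplex_projection_dist_general B y ξ hξ hcond
end

section
/- Let B be a finite set, s, t ∈ [0,1], and u, v ∈ Δ(B). Then ‖s·u − t·v‖₁ ≥ (1/2)·max(s,t)·‖u − v‖₁. -/
/-!
With `m = max s t`, write `m • (u - v) = (m - s) • u + (s • u - t • v) - (m - t) • v`.
Since `u` and `v` are probability vectors, the outer terms have `ℓ¹` norms `m - s` and `m - t`,
which add up to `|s - t|`; and `|s - t| ≤ ‖s • u - t • v‖₁` by pairing with the all-ones
functional. Hence `m ‖u - v‖₁ ≤ 2 ‖s • u - t • v‖₁`.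
-/

open Finset

lemma mul_abs_sub_le_of_le {x y m s t : ℝ} (hx : 0 ≤ x) (hy : 0 ≤ y) (hs : s ≤ m) (ht : t ≤ m) :
    m * |x - y| ≤ (m - s) * x + |s * x - t * y| + (m - t) * y :=
  calc m * |x - y| ≤ |m * (x - y)| := by
        rw [abs_mul]; exact mul_le_mul_of_nonneg_right (le_abs_self m) (abs_nonneg _)
    _ = |(m - s) * x + (s * x - t * y) + -((m - t) * y)| := by ring_nf
    _ ≤ |(m - s) * x| + |s * x - t * y| + |-((m - t) * y)| := abs_add_three _ _ _
    _ = (m - s) * x + |s * x - t * y| + (m - t) * y := by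
        rw [abs_neg, abs_of_nonneg (mul_nonneg (sub_nonneg.2 hs) hx),
          abs_of_nonneg (mul_nonneg (sub_nonneg.2 ht) hy)]

section Simplex

variable {B : Type*} [Fintype B] {u v : B → ℝ}

lemma abs_sub_le_sum_abs_mul_sub (s t : ℝ) (hu : ∑ a, u a = 1) (hv : ∑ a, v a = 1) :
    |s - t| ≤ ∑ a, |s * u a - t * v a| :=
  calc |s - t| = |∑ a, (s * u a - t * v a)| := by
        rw [sum_sub_distrib, ← mul_sum, ← mul_sum, hu, hv, mul_one, mul_one]
    _ ≤ ∑ a, |s * u a - t * v a| := abs_sum_le_sum_abs _ _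

lemma max_mul_sum_abs_sub_le (s t : ℝ) (hu : (∀ a, 0 ≤ u a) ∧ ∑ a, u a = 1)
    (hv : (∀ a, 0 ≤ v a) ∧ ∑ a, v a = 1) :
    max s t * ∑ a, |u a - v a| ≤ |s - t| + ∑ a, |s * u a - t * v a| :=
  calc max s t * ∑ a, |u a - v a|
      ≤ ∑ a, ((max s t - s) * u a + |s * u a - t * v a| + (max s t - t) * v a) := by
        rw [mul_sum]
        exact sum_le_sum fun a _ ↦
          mul_abs_sub_le_of_le (hu.1 a) (hv.1 a) (le_max_left s t) (le_max_right s t)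
    _ = (max s t - s) + (max s t - t) + ∑ a, |s * u a - t * v a| := by
        rw [sum_add_distrib, sum_add_distrib, ← mul_sum, ← mul_sum, hu.2, hv.2]
        ring
    _ = |s - t| + ∑ a, |s * u a - t * v a| := by
        rw [abs_sub_comm, ← max_sub_min_eq_abs]
        linarith [max_add_min s t]

end Simplex

theorem l1_biscalar_lower_bound_general (B : Type*) [Fintype B] (s t : ℝ)
    (u v : B → ℝ) (hu : (∀ a, 0 ≤ u a) ∧ ∑ a, u a = 1)
    (hv : (∀ a, 0 ≤ v a) ∧ ∑ a, v a = 1) :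
    (1 / 2) * max s t * ∑ a, |u a - v a| ≤ ∑ a, |s * u a - t * v a| := by
  have h_split := max_mul_sum_abs_sub_le s t hu hv
  have h_gap := abs_sub_le_sum_abs_mul_sub s t hu.2 hv.2
  linarith

theorem l1_biscalar_lower_bound (B : Type*) [Fintype B] (s t : ℝ)
    (hs : s ∈ Set.Icc (0:ℝ) 1) (ht : t ∈ Set.Icc (0:ℝ) 1)
    (u v : B → ℝ) (hu : (∀ a, 0 ≤ u a) ∧ ∑ a, u a = 1)
    (hv : (∀ a, 0 ≤ v a) ∧ ∑ a, v a = 1) :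
    (1 / 2) * max s t * ∑ a, |u a - v a| ≤ ∑ a, |s * u a - t * v a| :=
  l1_biscalar_lower_bound_general B s t u v hu hv
end

section
/- Let A, B be finite sets and Q, Q̃ : A → Δ(B). Define κ := {y ∈ Δ(A×B) : y_{ab} = Q(a)_b · Σ_{b'} y_{ab'} for all a, b} and similarly κ̃ with Q̃. Then min{‖y − ỹ‖₁ : y ∈ κ, ỹ ∈ κ̃} ≥ (1/2)·min_{a∈A} ‖Q(a) − Q̃(a)‖₁. -/
theorem dist_credal_sets_sdp (A B : Type*) [Fintype A] [Fintype B] [Nonempty A]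
    (Q Qt : A → B → ℝ)
    (hQ : ∀ a, (∀ b, 0 ≤ Q a b) ∧ ∑ b, Q a b = 1)
    (hQt : ∀ a, (∀ b, 0 ≤ Qt a b) ∧ ∑ b, Qt a b = 1)
    (y yt : A × B → ℝ)
    (hy : (∀ p, 0 ≤ y p) ∧ (∑ p, y p = 1) ∧ ∀ a b, y (a, b) = Q a b * ∑ b', y (a, b'))
    (hyt : (∀ p, 0 ≤ yt p) ∧ (∑ p, yt p = 1) ∧ ∀ a b, yt (a, b) = Qt a b * ∑ b', yt (a, b')) :
    (1 / 2) * Finset.univ.inf' Finset.univ_nonempty (fun a => ∑ b, |Q a b - Qt a b|)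
      ≤ ∑ p, |y p - yt p| := by
  obtain ⟨hy0, hy1, hyQ⟩ := hy
  obtain ⟨hyt0, hyt1, hytQ⟩ := hyt
  set m : A → ℝ := fun a => ∑ b, y (a, b) with hm
  set mt : A → ℝ := fun a => ∑ b, yt (a, b) with hmt
  have hm0 : ∀ a, 0 ≤ m a := fun a => Finset.sum_nonneg fun b _ => hy0 _
  have hmsum : ∑ a, m a = 1 := by
    rw [hm, ← hy1, Fintype.sum_prod_type]
  set D : A → ℝ := fun a => ∑ b, |Q a b - Qt a b| with hD
  set Dmin := Finset.univ.inf' Finset.univ_nonempty D with hDmin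
  have key : ∀ a, m a * Dmin ≤ 2 * ∑ b, |y (a, b) - yt (a, b)| := by
    intro a
    have h1 : |m a - mt a| ≤ ∑ b, |y (a, b) - yt (a, b)| := by
      rw [hm, hmt]
      simp only [← Finset.sum_sub_distrib]
      exact Finset.abs_sum_le_sum_abs _ _
    have h2 : m a * D a - |m a - mt a| ≤ ∑ b, |y (a, b) - yt (a, b)| := by
      have hb : ∀ b ∈ Finset.univ,
          m a * |Q a b - Qt a b| - |m a - mt a| * Qt a b ≤ |y (a, b) - yt (a, b)| := by
        intro b _
        have e1 : y (a, b) = Q a b * m a := hyQ a b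
        have e2 : yt (a, b) = Qt a b * mt a := hytQ a b
        have t1 : |Q a b * m a - Qt a b * m a| ≤
            |Q a b * m a - Qt a b * mt a| + |Qt a b * mt a - Qt a b * m a| :=
          abs_sub_le _ _ _
        have t2 : |Q a b * m a - Qt a b * m a| = m a * |Q a b - Qt a b| := by
          rw [← sub_mul, abs_mul, abs_of_nonneg (hm0 a), mul_comm]
        have t3 : |Qt a b * mt a - Qt a b * m a| = |m a - mt a| * Qt a b := by
          rw [← mul_sub, abs_mul, abs_of_nonneg ((hQt a).1 b), abs_sub_comm, mul_comm]
        rw [e1, e2]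
        linarith
      calc m a * D a - |m a - mt a|
          = ∑ b, (m a * |Q a b - Qt a b| - |m a - mt a| * Qt a b) := by
            rw [Finset.sum_sub_distrib, ← Finset.mul_sum, ← Finset.mul_sum, (hQt a).2, mul_one]
        _ ≤ ∑ b, |y (a, b) - yt (a, b)| := Finset.sum_le_sum hb
    have hDle : Dmin ≤ D a := Finset.inf'_le _ (Finset.mem_univ a)
    have : m a * Dmin ≤ m a * D a := mul_le_mul_of_nonneg_left hDle (hm0 a)
    linarith
  have hsum : (∑ a, m a * Dmin) ≤ 2 * ∑ p, |y p - yt p| := by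
    rw [Fintype.sum_prod_type, Finset.mul_sum]
    exact Finset.sum_le_sum fun a _ => key a
  rw [← Finset.sum_mul, hmsum, one_mul] at hsum
  linarith
end

section
/- Let F be a finite set and for i ∈ F define α_i : Δ(2^F) → [0,1] by α_i(ψ) := Pr_{A∼ψ}[i ∈ A]. For any i ∈ F, ψ ∈ Δ(2^F), and p ∈ [0,1], there exists ψ' ∈ Δ(2^F) with α_i(ψ') = p, α_j(ψ') = α_j(ψ) for all j ≠ i, and ‖ψ − ψ'‖₁ = 2|α_i(ψ) − p|. -/
/-!
Toggling `i` is an involution `A ↦ A ∆ {i}` of `2^F` that fixes every event `{A | j ∈ A}` with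
`j ≠ i` and swaps the event `{A | i ∈ A}` with its complement. Moving the same fraction of the
mass of every `A` off the event across the involution therefore changes only `α_i`, and the
`ℓ¹` cost is twice the mass moved. Moving mass into the event raises `α_i`; moving mass into the
complement lowers it.
-/

open Finset Function

theorem Function.Involutive.sum_comp_eq {α β : Type*} [AddCommMonoid β] {σ : α → α}
    (hσ : Involutive σ) {u v : Finset α} (huv : ∀ a, σ a ∈ u ↔ a ∈ v) (f : α → β) :
    ∑ a ∈ v, f (σ a) = ∑ a ∈ u, f a :=
  sum_nbij' σ σ (fun a ha => (huv a).2 ha) (fun a ha => (huv (σ a)).1 (by rwa [hσ a]))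
    (fun a _ => hσ a) (fun a _ => hσ a) (fun _ _ => rfl)

namespace MassTransfer

variable {α : Type*} [Fintype α] [DecidableEq α] {σ : α → α} {s : Finset α} {t p : ℝ}
  {ψ : α → ℝ}

/-- Move the fraction `t` of the mass of each `a ∉ s` to `σ a`. -/
noncomputable def transfer (σ : α → α) (s : Finset α) (t : ℝ) (ψ : α → ℝ) (a : α) : ℝ :=
  ψ a + t * ((↑sᶜ : Set α).indicator ψ (σ a) - (↑sᶜ : Set α).indicator ψ a)

theorem transfer_nonneg (hσs : ∀ a, σ a ∈ s ↔ a ∉ s) (hψ : ∀ a, 0 ≤ ψ a) (ht₀ : 0 ≤ t)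
    (ht₁ : t ≤ 1) (a : α) : 0 ≤ transfer σ s t ψ a := by
  by_cases ha : a ∈ s
  · have hσa : 0 ≤ (↑sᶜ : Set α).indicator ψ (σ a) := Set.indicator_nonneg (fun b _ => hψ b) _
    simp only [transfer, Set.indicator_of_notMem (by simpa using ha : a ∉ (↑sᶜ : Set α)),
      sub_zero]
    exact add_nonneg (hψ a) (mul_nonneg ht₀ hσa)
  · have hσa : σ a ∉ (↑sᶜ : Set α) := by simpa [hσs] using ha
    simp only [transfer, Set.indicator_of_notMem hσa,
      Set.indicator_of_mem (by simpa using ha : a ∈ (↑sᶜ : Set α))]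
    nlinarith [hψ a]

theorem sum_transfer_of_invariant (hσ : Involutive σ) {u : Finset α}
    (hu : ∀ a, σ a ∈ u ↔ a ∈ u) : ∑ a ∈ u, transfer σ s t ψ a = ∑ a ∈ u, ψ a := by
  simp only [transfer, sum_add_distrib, ← mul_sum, sum_sub_distrib, hσ.sum_comp_eq hu, sub_self,
    mul_zero, add_zero]

theorem sum_transfer_target (hσ : Involutive σ) (hσs : ∀ a, σ a ∈ s ↔ a ∉ s) :
    ∑ a ∈ s, transfer σ s t ψ a = ∑ a ∈ s, ψ a + t * ∑ a ∈ sᶜ, ψ a := by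
  have hout : ∑ a ∈ s, (↑sᶜ : Set α).indicator ψ a = 0 :=
    sum_eq_zero fun a ha => Set.indicator_of_notMem (by simpa using ha) _
  have hin : ∑ a ∈ s, (↑sᶜ : Set α).indicator ψ (σ a) = ∑ a ∈ sᶜ, ψ a := by
    rw [hσ.sum_comp_eq (u := sᶜ) (fun a => by simp [hσs]), sum_indicator_subset _ subset_rfl]
  simp only [transfer, sum_add_distrib, ← mul_sum, sum_sub_distrib, hout, hin, sub_zero]

theorem sum_abs_sub_transfer (hσ : Involutive σ) (hσs : ∀ a, σ a ∈ s ↔ a ∉ s)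
    (hψ : ∀ a, 0 ≤ ψ a) (ht₀ : 0 ≤ t) :
    ∑ a, |ψ a - transfer σ s t ψ a| = 2 * t * ∑ a ∈ sᶜ, ψ a := by
  set g := (↑sᶜ : Set α).indicator ψ
  -- `g` vanishes at one of `a`, `σ a`, so the two terms of the difference never cancel.
  have hpt : ∀ a, |ψ a - transfer σ s t ψ a| = t * (g (σ a) + g a) := fun a => by
    have hg : g (σ a) = 0 ∨ g a = 0 := by
      by_cases ha : a ∈ s
      · exact .inr (Set.indicator_of_notMem (by simpa using ha) _)
      · exact .inl (Set.indicator_of_notMem (by simpa [hσs] using ha) _)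
    have hg₀ : ∀ b, 0 ≤ g b := Set.indicator_nonneg fun b _ => hψ b
    change |ψ a - (ψ a + t * (g (σ a) - g a))| = _
    rw [sub_add_cancel_left, abs_neg, abs_mul, abs_of_nonneg ht₀]
    rcases hg with h | h
    · rw [h, zero_sub, zero_add, abs_neg, abs_of_nonneg (hg₀ a)]
    · rw [h, sub_zero, add_zero, abs_of_nonneg (hg₀ (σ a))]
  rw [sum_congr rfl fun a _ => hpt a, ← mul_sum, sum_add_distrib,
    hσ.sum_comp_eq (u := univ) (by simp), sum_indicator_subset _ (subset_univ _)]
  ring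

theorem exists_transfer_of_le (hσ : Involutive σ) (hσs : ∀ a, σ a ∈ s ↔ a ∉ s)
    (hψ : ∀ a, 0 ≤ ψ a) (hlo : ∑ a ∈ s, ψ a ≤ p) (hhi : p ≤ ∑ a, ψ a) :
    ∃ ψ' : α → ℝ, (∀ a, 0 ≤ ψ' a) ∧
      (∀ u : Finset α, (∀ a, σ a ∈ u ↔ a ∈ u) → ∑ a ∈ u, ψ' a = ∑ a ∈ u, ψ a) ∧
      ∑ a ∈ s, ψ' a = p ∧ ∑ a, |ψ a - ψ' a| = 2 * (p - ∑ a ∈ s, ψ a) := by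
  set r := ∑ a ∈ sᶜ, ψ a
  have hr₀ : 0 ≤ r := sum_nonneg fun a _ => hψ a
  have hr : r = ∑ a, ψ a - ∑ a ∈ s, ψ a := eq_sub_of_add_eq (sum_compl_add_sum s ψ)
  -- For `r = 0` the junk value `0 / 0 = 0` is the right fraction, since then `p = ∑ a ∈ s, ψ a`.
  set t := (p - ∑ a ∈ s, ψ a) / r
  have htr : t * r = p - ∑ a ∈ s, ψ a := by
    rcases eq_or_ne r 0 with h | h
    · simp only [t, h, div_zero, zero_mul]; linarith
    · exact div_mul_cancel₀ _ h
  refine ⟨transfer σ s t ψ, transfer_nonneg hσs hψ (div_nonneg (by linarith) hr₀)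
      (div_le_one_of_le₀ (by linarith) hr₀), fun u hu => sum_transfer_of_invariant hσ hu, ?_, ?_⟩
  · rw [sum_transfer_target hσ hσs, htr]; ring
  · rw [sum_abs_sub_transfer hσ hσs hψ (div_nonneg (by linarith) hr₀), mul_assoc, htr]

theorem exists_transfer (hσ : Involutive σ) (hσs : ∀ a, σ a ∈ s ↔ a ∉ s)
    (hψ : ∀ a, 0 ≤ ψ a) (hp₀ : 0 ≤ p) (hp₁ : p ≤ ∑ a, ψ a) :
    ∃ ψ' : α → ℝ, (∀ a, 0 ≤ ψ' a) ∧
      (∀ u : Finset α, (∀ a, σ a ∈ u ↔ a ∈ u) → ∑ a ∈ u, ψ' a = ∑ a ∈ u, ψ a) ∧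
      ∑ a ∈ s, ψ' a = p ∧ ∑ a, |ψ a - ψ' a| = 2 * |∑ a ∈ s, ψ a - p| := by
  have hcompl := sum_compl_add_sum s ψ
  rcases le_total (∑ a ∈ s, ψ a) p with h | h
  · obtain ⟨ψ', h₀, hinv, hs, hdist⟩ := exists_transfer_of_le hσ hσs hψ h hp₁
    exact ⟨ψ', h₀, hinv, hs, by rw [hdist, abs_of_nonpos (by linarith)]; ring⟩
  · obtain ⟨ψ', h₀, hinv, hs, hdist⟩ := exists_transfer_of_le (s := sᶜ) (p := ∑ a, ψ a - p) hσ
      (fun a => by simp [hσs]) hψ (by linarith) (by linarith)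
    have htotal := hinv univ (by simp)
    have hcompl' := sum_compl_add_sum s ψ'
    exact ⟨ψ', h₀, hinv, by linarith, by rw [hdist, abs_of_nonneg (by linarith)]; linarith⟩

end MassTransfer

theorem fix_event_probability (F : Type*) [Fintype F] [DecidableEq F]
    (ψ : Finset F → ℝ) (hψ : (∀ A, 0 ≤ ψ A) ∧ ∑ A, ψ A = 1)
    (i : F) (p : ℝ) (hp : p ∈ Set.Icc (0:ℝ) 1) :
    ∃ ψ' : Finset F → ℝ, (∀ A, 0 ≤ ψ' A) ∧ (∑ A, ψ' A = 1) ∧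
      (∑ A ∈ Finset.univ.filter (fun A : Finset F => i ∈ A), ψ' A) = p ∧
      (∀ j, j ≠ i →
        (∑ A ∈ Finset.univ.filter (fun A : Finset F => j ∈ A), ψ' A) =
          ∑ A ∈ Finset.univ.filter (fun A : Finset F => j ∈ A), ψ A) ∧
      (∑ A, |ψ A - ψ' A|) =
        2 * |(∑ A ∈ Finset.univ.filter (fun A : Finset F => i ∈ A), ψ A) - p| := by
  obtain ⟨hψ₀, hψ₁⟩ := hψ
  obtain ⟨ψ', h₀, hinv, hi, hdist⟩ := MassTransfer.exists_transfer
    (σ := fun A => symmDiff A {i}) (s := univ.filter fun A => i ∈ A)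
    (fun A => symmDiff_symmDiff_cancel_right _ _) (by simp [mem_symmDiff]) hψ₀ hp.1
    (hψ₁ ▸ hp.2)
  refine ⟨ψ', h₀, ?_, hi, fun j hj => hinv _ (by simp [mem_symmDiff, hj]), hdist⟩
  simpa [hψ₁] using hinv univ (by simp)
end

section
/- Let A, B be finite sets, f : A → B a surjection, ξ ∈ Δ(A), and ψ ∈ Δ(B). Then there exists ξ' ∈ Δ(A) with f_*ξ' = ψ and ‖ξ − ξ'‖₁ = ‖f_*ξ − ψ‖₁. -/
/-!
Work fiber by fiber. On a fiber of mass `S` with target mass `t`, a deficit `S < t` is made up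
by putting the missing mass `t - S` on a single point of the fiber (possible since `f` is
surjective), and an excess `t < S` is removed by scaling the fiber down by `t / S`. Either way
the ℓ¹ cost inside the fiber is exactly `|S - t|`.
-/

open Finset

namespace Finset

variable {ι : Type*} {s : Finset ι} {x : ι → ℝ} {t : ℝ}

theorem exists_nonneg_sum_eq_sum_abs_sub_of_sum_le {a : ι} (ha : a ∈ s) (hx : ∀ i ∈ s, 0 ≤ x i)
    (h : ∑ i ∈ s, x i ≤ t) :
    ∃ y : ι → ℝ, (∀ i ∈ s, 0 ≤ y i) ∧ ∑ i ∈ s, y i = t ∧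
      ∑ i ∈ s, |x i - y i| = |∑ i ∈ s, x i - t| := by
  classical
  set c := t - ∑ i ∈ s, x i
  have hc : 0 ≤ c := sub_nonneg.2 h
  have hbump (i : ι) : 0 ≤ if i = a then c else 0 := ite_nonneg hc le_rfl
  refine ⟨fun i => x i + if i = a then c else 0, fun i hi => add_nonneg (hx i hi) (hbump i),
    ?_, ?_⟩
  · simp [sum_add_distrib, ha, c]
  · calc ∑ i ∈ s, |x i - (x i + if i = a then c else 0)| = ∑ i ∈ s, if i = a then c else 0 := by
          refine sum_congr rfl fun i _ => ?_
          rw [sub_add_cancel_left, abs_neg, abs_of_nonneg (hbump i)]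
      _ = |∑ i ∈ s, x i - t| := by
          rw [sum_ite_eq', if_pos ha, abs_sub_comm, abs_of_nonneg hc]

theorem exists_nonneg_sum_eq_sum_abs_sub_of_lt_sum (hx : ∀ i ∈ s, 0 ≤ x i) (ht : 0 ≤ t)
    (h : t < ∑ i ∈ s, x i) :
    ∃ y : ι → ℝ, (∀ i ∈ s, 0 ≤ y i) ∧ ∑ i ∈ s, y i = t ∧
      ∑ i ∈ s, |x i - y i| = |∑ i ∈ s, x i - t| := by
  set S := ∑ i ∈ s, x i
  have hS : 0 < S := ht.trans_lt h
  have hr : 0 ≤ t / S := div_nonneg ht hS.le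
  have hr' : 0 ≤ 1 - t / S := sub_nonneg.2 ((div_le_one hS).2 h.le)
  refine ⟨fun i => t / S * x i, fun i hi => mul_nonneg hr (hx i hi), ?_, ?_⟩
  · rw [← mul_sum, div_mul_cancel₀ t hS.ne']
  · calc ∑ i ∈ s, |x i - t / S * x i| = ∑ i ∈ s, (1 - t / S) * x i := by
          refine sum_congr rfl fun i hi => ?_
          rw [← one_sub_mul, abs_of_nonneg (mul_nonneg hr' (hx i hi))]
      _ = |S - t| := by
          rw [← mul_sum, sub_mul, div_mul_cancel₀ t hS.ne', one_mul, abs_of_pos (sub_pos.2 h)]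

theorem exists_nonneg_sum_eq_sum_abs_sub (hs : s.Nonempty) (hx : ∀ i ∈ s, 0 ≤ x i)
    (ht : 0 ≤ t) :
    ∃ y : ι → ℝ, (∀ i ∈ s, 0 ≤ y i) ∧ ∑ i ∈ s, y i = t ∧
      ∑ i ∈ s, |x i - y i| = |∑ i ∈ s, x i - t| := by
  obtain ⟨a, ha⟩ := hs
  rcases le_or_gt (∑ i ∈ s, x i) t with h | h
  · exact exists_nonneg_sum_eq_sum_abs_sub_of_sum_le ha hx h
  · exact exists_nonneg_sum_eq_sum_abs_sub_of_lt_sum hx ht h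

end Finset

theorem lift_preserving_tvd (A B : Type*) [Fintype A] [Fintype B] [DecidableEq B]
    (f : A → B) (hf : Function.Surjective f)
    (ξ : A → ℝ) (hξ : (∀ i, 0 ≤ ξ i) ∧ ∑ i, ξ i = 1)
    (ψ : B → ℝ) (hψ : (∀ k, 0 ≤ ψ k) ∧ ∑ k, ψ k = 1) :
    ∃ ξ' : A → ℝ, (∀ i, 0 ≤ ξ' i) ∧ (∑ i, ξ' i = 1) ∧
      (∀ k, ∑ i ∈ Finset.univ.filter (fun i => f i = k), ξ' i = ψ k) ∧
      (∑ i, |ξ i - ξ' i|) =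
        ∑ k, |(∑ i ∈ Finset.univ.filter (fun i => f i = k), ξ i) - ψ k| := by
  have hfiber_nonempty (k : B) : ({i | f i = k} : Finset A).Nonempty := by
    obtain ⟨i, rfl⟩ := hf k
    exact ⟨i, by simp⟩
  choose y hy_nonneg hy_sum hy_cost using fun k =>
    exists_nonneg_sum_eq_sum_abs_sub (hfiber_nonempty k) (fun i _ => hξ.1 i) (hψ.1 k)
  have hglue (k : B) : ∀ i ∈ ({i | f i = k} : Finset A), y (f i) i = y k i := fun i hi => by
    rw [(mem_filter.1 hi).2]
  have hfiber_sum (k : B) : ∑ i ∈ {i | f i = k}, y (f i) i = ψ k := by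
    rw [sum_congr rfl (hglue k), hy_sum]
  have hfiber_cost (k : B) :
      ∑ i ∈ {i | f i = k}, |ξ i - y (f i) i| = |∑ i ∈ {i | f i = k}, ξ i - ψ k| := by
    rw [sum_congr rfl fun i hi => congrArg (fun z => |ξ i - z|) (hglue k i hi), hy_cost]
  refine ⟨fun i => y (f i) i, fun i => hy_nonneg (f i) i (by simp), ?_, hfiber_sum, ?_⟩
  · rw [← sum_fiberwise univ f, sum_congr rfl fun k _ => hfiber_sum k, hψ.2]
  · rw [← sum_fiberwise univ f]
    exact sum_congr rfl fun k _ => hfiber_cost k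
end

section
/- Let X be a non-empty compact topological space and f, v : X → R continuous with f* := max f. Suppose that for every x ∈ X with f(x) = f*, we have v(x) < 0. Then there exists ε > 0 such that max_{x∈X}(f(x) + ε·v(x)) < f*. -/
/-! Call a pair `(ε, x)` good when `ε > 0 → f x + ε v x < f*`. Goodness holds near `(0, x)` for
every `x`: by continuity of `f + ε v` where `f x < f*`, and because `v < 0` nearby where
`f x = f*`. Compactness of `X` turns this into goodness of `(ε, x)` for all `x` and all small
`ε`. -/

open Filter Topology

theorem eventually_nhds_zero_add_mul_lt {X : Type*} [TopologicalSpace X] {f v : X → ℝ}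
    (hf : Continuous f) (hv : Continuous v) {c : ℝ} (hle : ∀ x, f x ≤ c)
    (hneg : ∀ x, f x = c → v x < 0) (x : X) :
    ∀ᶠ p : ℝ × X in 𝓝 (0, x), 0 < p.1 → f p.2 + p.1 * v p.2 < c := by
  rcases (hle x).lt_or_eq with hlt | heq
  · have hcont : Continuous fun p : ℝ × X ↦ f p.2 + p.1 * v p.2 := by fun_prop
    have hval : f x + 0 * v x < c := by simpa using hlt
    exact ((hcont.tendsto (0, x)).eventually_lt_const hval).mono fun _ h _ ↦ h
  · have hv_neg : ∀ᶠ y in 𝓝 x, v y < 0 := (hv.tendsto x).eventually_lt_const (hneg x heq)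
    filter_upwards [(continuous_snd.tendsto (0, x)).eventually hv_neg] with p hp hε
    nlinarith [hle p.2]

theorem dec_max_general {X : Type*} [TopologicalSpace X] [CompactSpace X]
    (f v : X → ℝ) (hf : Continuous f) (hv : Continuous v)
    (fstar : ℝ) (hfstar : IsGreatest (Set.range f) fstar)
    (hneg : ∀ x, f x = fstar → v x < 0) :
    ∃ ε > 0, ∀ x, f x + ε * v x < fstar := by
  have hle : ∀ x, f x ≤ fstar := fun x ↦ hfstar.2 ⟨x, rfl⟩
  have hsmall : ∀ᶠ ε in 𝓝 (0 : ℝ), ∀ x ∈ Set.univ, 0 < ε → f x + ε * v x < fstar :=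
    isCompact_univ.eventually_forall_of_forall_eventually fun x _ ↦
      eventually_nhds_zero_add_mul_lt hf hv hle hneg x
  obtain ⟨ε, hε, hεpos⟩ :=
    ((hsmall.filter_mono nhdsWithin_le_nhds).and (self_mem_nhdsWithin (s := Set.Ioi 0))).exists
  exact ⟨ε, hεpos, fun x ↦ hε x trivial hεpos⟩

theorem dec_max {X : Type*} [TopologicalSpace X] [CompactSpace X] [Nonempty X]
    (f v : X → ℝ) (hf : Continuous f) (hv : Continuous v)
    (fstar : ℝ) (hfstar : IsGreatest (Set.range f) fstar)
    (hneg : ∀ x, f x = fstar → v x < 0) :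
    ∃ ε > 0, ∀ x, f x + ε * v x < fstar :=
  dec_max_general f v hf hv fstar hfstar hneg
end
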